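/- Let a > 0 and in the plane let B = (−a/2, 0), C = (a/2, 0), and A = (A_x, A_y) with A_y > 0 and A_x ≥ 0 (equivalently dist(A, C) ≤ dist(A, B)). Let β = ∠ A B C; note β < π/2. For φ ∈ [0, β] define D(φ) = (0, (a/2)·tan φ). Then the function φ ↦ dist(B, D(φ)) is strictly increasing on [0, β], and the function φ ↦ dist(A, D(φ)) + dist(B, D(φ)) is non-increasing (antitone) on [0, β]. -/

import Mathlib

open EuclideanGeometry

/-- A point of the plane given by its two coordinates. -/
noncomputable def pt (x y : ℝ) : EuclideanSpace ℝ (Fin 2) := !₂[x, y]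

/-! Put `c = a/2` and `t(φ) = c·tan φ`, so that `D(φ) = (0, t(φ))` with `t` increasing on
`[0, β]`, and `dist(B, D) = √(c² + t²)` increases with `t`. The function
`t ↦ dist(A, (0,t)) + dist(B, (0,t))` is convex, and by the triangle inequality it is minimal
where the bisector meets the segment `BA`, namely at `t = c·tan β`; a convex function is
antitone to the left of a minimiser. -/

open Real Set AffineMap

lemma dist_pt (x y x' y' : ℝ) :
    dist (pt x y) (pt x' y') = √((x - x') ^ 2 + (y - y') ^ 2) := by
  simp [pt, EuclideanSpace.dist_eq, Fin.sum_univ_two, Real.dist_eq, sq_abs]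

lemma lineMap_pt (x y x' y' t : ℝ) :
    lineMap (pt x y) (pt x' y') t = pt (x + t * (x' - x)) (y + t * (y' - y)) := by
  ext i
  fin_cases i <;> simp [pt, lineMap_apply] <;> ring

lemma angle_pt_eq_arctan {x y p q : ℝ} (hpx : p < x) (hpq : p < q) (hy : 0 ≤ y) :
    ∠ (pt x y) (pt p 0) (pt q 0) = arctan (y / (x - p)) := by
  have hxp : 0 < x - p := sub_pos.2 hpx
  have hqp : 0 < q - p := sub_pos.2 hpq
  refine injOn_cos ⟨angle_nonneg _ _ _, angle_le_pi _ _ _⟩ ⟨arctan_nonneg.2 (div_nonneg hy hxp.le),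
    (arctan_lt_pi_div_two _).le.trans (by linarith [pi_pos])⟩ ?_
  have hsqrt : √(1 + (y / (x - p)) ^ 2) = √((x - p) ^ 2 + y ^ 2) / (x - p) := by
    rw [← sqrt_sq hxp.le, ← sqrt_div' _ (sq_nonneg _), sqrt_sq hxp.le]
    congr 1
    field_simp
  rw [EuclideanGeometry.angle, InnerProductGeometry.cos_angle, cos_arctan, hsqrt]
  simp only [pt, vsub_eq_sub, PiLp.inner_apply, PiLp.sub_apply, RCLike.inner_apply,
    ringHom_apply, Fin.sum_univ_two, Fin.isValue, Matrix.cons_val_zero, Matrix.cons_val_one,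
    Matrix.cons_val_fin_one, sub_self, sub_zero, zero_mul, add_zero, EuclideanSpace.norm_eq,
    norm_eq_abs, sq_abs, ne_eq, OfNat.ofNat_ne_zero, not_false_eq_true, zero_pow, one_div, inv_div]
  rw [sqrt_sq hqp.le, mul_comm (q - p), mul_div_mul_right _ _ hqp.ne']

lemma strictMonoOn_dist_pt (x y x' : ℝ) :
    StrictMonoOn (fun t => dist (pt x y) (pt x' t)) (Ici y) := by
  intro s hs t ht hst
  simp only [dist_pt]
  apply Real.sqrt_lt_sqrt (by positivity)
  nlinarith [mem_Ici.1 hs]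

lemma convexOn_dist_pt (z : EuclideanSpace ℝ (Fin 2)) (x : ℝ) :
    ConvexOn ℝ univ fun s => dist z (pt x s) := by
  have h := (convexOn_univ_dist z).comp_affineMap (lineMap (pt x 0) (pt x 1))
  simpa [Function.comp_def, lineMap_pt, dist_comm _ z] using h

lemma Wbtw.dist_add_dist_le {V P : Type*} [NormedAddCommGroup V] [NormedSpace ℝ V]
    [MetricSpace P] [NormedAddTorsor V P] {p x q : P} (h : Wbtw ℝ p x q) (y : P) :
    dist q x + dist p x ≤ dist q y + dist p y := by
  calc dist q x + dist p x = dist p q := by rw [add_comm, dist_comm q x, h.dist_add_dist]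
    _ ≤ dist p y + dist y q := dist_triangle p y q
    _ = dist q y + dist p y := by rw [dist_comm y q, add_comm]

lemma ConvexOn.antitoneOn_Iic_of_isMinOn {𝕜 β : Type*} [Field 𝕜] [LinearOrder 𝕜]
    [IsStrictOrderedRing 𝕜] [AddCommGroup β] [LinearOrder β] [IsOrderedCancelAddMonoid β]
    [Module 𝕜 β] [PosSMulStrictMono 𝕜 β] {s : Set 𝕜} {f : 𝕜 → β} {m : 𝕜}
    (hf : ConvexOn 𝕜 s f) (hm : IsMinOn f s m) (hms : m ∈ s) :
    AntitoneOn f (s ∩ Iic m) := by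
  intro x hx y hy hxy
  rcases hy.2.eq_or_lt with rfl | hym
  · exact hm hx.1
  · exact hf.le_left_of_right_le'' hx.1 hms hxy hym (hm hy.1)

/-- With `B = (−a/2, 0)`, `C = (a/2, 0)` and `A = (A_x, A_y)` with `A_y > 0`,
`A_x ≥ 0`, and `β = ∠ A B C < π/2`, along the perpendicular bisector
parameterized by `D(φ) = (0, (a/2)·tan φ)` for `φ ∈ [0, β]`, the distance
`dist(B, D(φ))` is strictly increasing in `φ`, while
`dist(A, D(φ)) + dist(B, D(φ))` is non-increasing in `φ`. -/
theorem bisector_branch_monotonicity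
    (a Ax Ay : ℝ) (ha : 0 < a) (hAy : 0 < Ay) (hAx : 0 ≤ Ax)
    (A B C : EuclideanSpace ℝ (Fin 2))
    (hA : A = pt Ax Ay) (hB : B = pt (-a / 2) 0) (hC : C = pt (a / 2) 0)
    (β : ℝ) (hβ : β = ∠ A B C)
    (D : ℝ → EuclideanSpace ℝ (Fin 2))
    (hD : ∀ φ : ℝ, D φ = pt 0 ((a / 2) * Real.tan φ)) :
    β < Real.pi / 2 ∧
    StrictMonoOn (fun φ => dist B (D φ)) (Set.Icc 0 β) ∧
    AntitoneOn (fun φ => dist A (D φ) + dist B (D φ)) (Set.Icc 0 β) := by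
  subst hA hB hC
  obtain rfl : D = fun φ => pt 0 (a / 2 * tan φ) := funext hD
  have hc : 0 < a / 2 := half_pos ha
  have hAc : 0 < Ax + a / 2 := by positivity
  have hβ_eq : β = arctan (Ay / (Ax + a / 2)) := by
    rw [hβ, angle_pt_eq_arctan (by linarith) (by linarith) hAy.le]
    ring_nf
  have hβ_lt : β < π / 2 := hβ_eq ▸ arctan_lt_pi_div_two _
  have hwbtw : Wbtw ℝ (pt (-a / 2) 0) (pt 0 (a / 2 * (Ay / (Ax + a / 2)))) (pt Ax Ay) := by
    refine ⟨(a / 2) / (Ax + a / 2), ⟨by positivity, (div_le_one hAc).2 (by linarith)⟩, ?_⟩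
    rw [lineMap_pt]
    congr 1 <;> field_simp <;> ring
  set T := a / 2 * (Ay / (Ax + a / 2))
  have ht_mono : StrictMonoOn (fun φ => a / 2 * tan φ) (Icc 0 β) := fun φ hφ ψ hψ hφψ =>
    mul_lt_mul_of_pos_left (strictMonoOn_tan ⟨by linarith [pi_pos, hφ.1], hφ.2.trans_lt hβ_lt⟩
      ⟨by linarith [pi_pos, hψ.1], hψ.2.trans_lt hβ_lt⟩ hφψ) hc
  have ht_maps : MapsTo (fun φ => a / 2 * tan φ) (Icc 0 β) (Icc 0 T) := by
    simpa [hβ_eq] using ht_mono.monotoneOn.mapsTo_Icc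
  refine ⟨hβ_lt, ?_, ?_⟩
  · exact (strictMonoOn_dist_pt _ _ _).comp ht_mono fun φ hφ => (ht_maps hφ).1
  · set f := fun s : ℝ => dist (pt Ax Ay) (pt 0 s) + dist (pt (-a / 2) 0) (pt 0 s)
    have hf_conv : ConvexOn ℝ univ f := (convexOn_dist_pt _ 0).add (convexOn_dist_pt _ 0)
    have hf_min : IsMinOn f univ T := fun s _ => hwbtw.dist_add_dist_le _
    exact (hf_conv.antitoneOn_Iic_of_isMinOn hf_min (mem_univ _)).comp_MonotoneOn
      ht_mono.monotoneOn fun φ hφ => ⟨mem_univ _, (ht_maps hφ).2⟩
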